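/- arXiv:2110.03394 — 2 statements merged into one kernel-verified Lean document; each statement's English description precedes it below -/
import Mathlib

section
/- Let K : ℝ × ℝ → ℝ be an α-regular Volterra kernel with α ∈ (0, 1/2), i.e. K(t,r) = 0 for t < r, K(·,r) is continuously differentiable on (r,∞), and |∂K/∂u (u,r)| ≤ C (u-r)^{α-1} for r < u. Then for all u ≠ v, the function φ(u,v) := ∫_{-∞}^{u∧v} ∂K/∂u(u,r) · ∂K/∂v(v,r) dr satisfies |φ(u,v)| ≤ C' |u-v|^{2α-1} for some constant C' depending only on C and α. -/
open MeasureTheory Set Filter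


lemma aux_G (α a : ℝ) (hα : α ∈ Set.Ioo (0:ℝ) (1/2)) (ha : 0 < a) :
    IntegrableOn (fun s : ℝ => (a+s)^(α-1) * s^(α-1)) (Set.Ici 0) ∧
    ∫ s in Set.Ici (0:ℝ), (a+s)^(α-1) * s^(α-1) ≤ (1/α + 1/(1-2*α)) * a^(2*α-1) := by
  obtain ⟨hα0, hα2⟩ := hα
  have hexp : α - 1 ≤ 0 := by linarith
  have h2m1 : 2*α - 2 < -1 := by linarith
  have hGmeas : Measurable (fun s : ℝ => (a+s)^(α-1) * s^(α-1)) := by fun_prop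
  -- piece 1 : Ioc 0 a
  have hdom1 : IntegrableOn (fun s : ℝ => a^(α-1) * s^(α-1)) (Set.Ioc 0 a) := by
    exact ((intervalIntegrable_iff_integrableOn_Ioc_of_le ha.le).mp
      (intervalIntegral.intervalIntegrable_rpow' (by linarith))).const_mul _
  have hb1 : ∀ s ∈ Set.Ioc (0:ℝ) a, (a+s)^(α-1) * s^(α-1) ≤ a^(α-1) * s^(α-1) := by
    intro s hs
    have h1 : (a+s)^(α-1) ≤ a^(α-1) :=
      Real.rpow_le_rpow_of_nonpos ha (le_add_of_nonneg_right hs.1.le) hexp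
    exact mul_le_mul_of_nonneg_right h1 (Real.rpow_nonneg hs.1.le _)
  have h1int : IntegrableOn (fun s : ℝ => (a+s)^(α-1) * s^(α-1)) (Set.Ioc 0 a) := by
    refine Integrable.mono hdom1 (hGmeas.aestronglyMeasurable.restrict) ?_
    filter_upwards [ae_restrict_mem measurableSet_Ioc] with s hs
    have h0 : 0 ≤ (a+s)^(α-1) * s^(α-1) :=
      mul_nonneg (Real.rpow_nonneg (by linarith [hs.1]) _) (Real.rpow_nonneg hs.1.le _)
    rw [Real.norm_eq_abs, abs_of_nonneg h0]
    exact le_trans (hb1 s hs) (le_abs_self _)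
  have hval1 : ∫ s in Set.Ioc (0:ℝ) a, a^(α-1) * s^(α-1) = a^(2*α-1) / α := by
    rw [integral_const_mul _ _, ← intervalIntegral.integral_of_le ha.le,
      integral_rpow (Or.inl (by linarith))]
    rw [Real.zero_rpow (by linarith : α - 1 + 1 ≠ 0)]
    rw [sub_add_cancel, sub_zero, ← mul_div_assoc, ← Real.rpow_add ha]
    ring_nf
  have h1bd : ∫ s in Set.Ioc (0:ℝ) a, (a+s)^(α-1) * s^(α-1) ≤ a^(2*α-1) / α := by
    rw [← hval1]
    exact setIntegral_mono_on h1int hdom1 measurableSet_Ioc hb1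
  -- piece 2 : Ioi a
  have hdom2 : IntegrableOn (fun s : ℝ => s^(2*α-2)) (Set.Ioi a) :=
    integrableOn_Ioi_rpow_of_lt h2m1 ha
  have hb2 : ∀ s ∈ Set.Ioi a, (a+s)^(α-1) * s^(α-1) ≤ s^(2*α-2) := by
    intro s hs
    have hs0 : 0 < s := lt_trans ha hs
    have h1 : (a+s)^(α-1) ≤ s^(α-1) :=
      Real.rpow_le_rpow_of_nonpos hs0 (le_add_of_nonneg_left ha.le) hexp
    calc (a+s)^(α-1) * s^(α-1) ≤ s^(α-1) * s^(α-1) :=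
          mul_le_mul_of_nonneg_right h1 (Real.rpow_nonneg hs0.le _)
      _ = s^(2*α-2) := by rw [← Real.rpow_add hs0]; ring_nf
  have h2int : IntegrableOn (fun s : ℝ => (a+s)^(α-1) * s^(α-1)) (Set.Ioi a) := by
    refine Integrable.mono hdom2 (hGmeas.aestronglyMeasurable.restrict) ?_
    filter_upwards [ae_restrict_mem measurableSet_Ioi] with s hs
    have hs0 : 0 < s := lt_trans ha hs
    have h0 : 0 ≤ (a+s)^(α-1) * s^(α-1) :=
      mul_nonneg (Real.rpow_nonneg (by linarith) _) (Real.rpow_nonneg hs0.le _)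
    rw [Real.norm_eq_abs, abs_of_nonneg h0]
    exact le_trans (hb2 s hs) (le_abs_self _)
  have hval2 : ∫ s in Set.Ioi a, s^(2*α-2) = a^(2*α-1) / (1-2*α) := by
    rw [integral_Ioi_rpow_of_lt h2m1 ha]
    have h1 : (2*α - 2 + 1) = 2*α - 1 := by ring
    rw [h1]
    rw [div_eq_div_iff (by linarith) (by linarith : (1:ℝ)-2*α ≠ 0)]
    ring
  have h2bd : ∫ s in Set.Ioi a, (a+s)^(α-1) * s^(α-1) ≤ a^(2*α-1) / (1-2*α) := by
    rw [← hval2]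
    exact setIntegral_mono_on h2int hdom2 measurableSet_Ioi hb2
  -- combine
  have hunion : Set.Ioc (0:ℝ) a ∪ Set.Ioi a = Set.Ioi 0 := Set.Ioc_union_Ioi_eq_Ioi ha.le
  have hIoiInt : IntegrableOn (fun s : ℝ => (a+s)^(α-1) * s^(α-1)) (Set.Ioi 0) := by
    rw [← hunion]; exact h1int.union h2int
  have hsplit : ∫ s in Set.Ioi (0:ℝ), (a+s)^(α-1) * s^(α-1)
      = (∫ s in Set.Ioc (0:ℝ) a, (a+s)^(α-1) * s^(α-1))
        + ∫ s in Set.Ioi a, (a+s)^(α-1) * s^(α-1) := by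
    rw [← hunion]
    exact setIntegral_union (Set.Ioc_disjoint_Ioi le_rfl) measurableSet_Ioi h1int h2int
  constructor
  · rwa [integrableOn_Ici_iff_integrableOn_Ioi]
  · rw [MeasureTheory.integral_Ici_eq_integral_Ioi, hsplit]
    have := add_le_add h1bd h2bd
    refine le_trans this (le_of_eq ?_)
    field_simp

lemma aux_sub (α u v : ℝ) (hα : α ∈ Set.Ioo (0:ℝ) (1/2)) (huv : v < u) :
    IntegrableOn (fun r : ℝ => (u-r)^(α-1) * (v-r)^(α-1)) (Set.Iic v) ∧
    ∫ r in Set.Iic v, (u-r)^(α-1) * (v-r)^(α-1)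
      = ∫ s in Set.Ici (0:ℝ), ((u-v)+s)^(α-1) * s^(α-1) := by
  have hmp : MeasurePreserving (fun r : ℝ => v - r) volume volume :=
    Measure.measurePreserving_sub_left volume v
  have hemb : MeasurableEmbedding (fun r : ℝ => v - r) :=
    (MeasurableEquiv.subLeft v).measurableEmbedding
  have hpre : (fun r : ℝ => v - r) ⁻¹' (Set.Ici 0) = Set.Iic v := by
    ext r; simp [sub_nonneg]
  have hcomp : ∀ r : ℝ, ((u-v) + (v - r))^(α-1) * (v-r)^(α-1)
      = (u-r)^(α-1) * (v-r)^(α-1) := by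
    intro r; congr 2; ring
  constructor
  · have := (hmp.integrableOn_comp_preimage hemb
      (f := fun s : ℝ => ((u-v)+s)^(α-1) * s^(α-1)) (s := Set.Ici 0))
    rw [hpre] at this
    have hG := (aux_G α (u-v) hα (by linarith)).1
    exact (this.mpr hG).congr_fun (fun r _ => hcomp r) measurableSet_Iic
  · have := hmp.setIntegral_preimage_emb hemb
      (fun s : ℝ => ((u-v)+s)^(α-1) * s^(α-1)) (Set.Ici 0)
    rw [hpre] at this
    rw [← this]
    exact setIntegral_congr_fun measurableSet_Iic (fun r _ => (hcomp r).symm)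

lemma aux_key (α C : ℝ) (hα : α ∈ Set.Ioo (0:ℝ) (1/2)) (hC : 0 < C)
    (Kd : ℝ → ℝ → ℝ)
    (hbound : ∀ r u : ℝ, r < u → |Kd u r| ≤ C * (u - r) ^ (α - 1))
    (u v : ℝ) (huv : v < u) :
    |∫ r in Set.Iic v, Kd u r * Kd v r|
      ≤ (C^2 * (1/α + 1/(1-2*α))) * (u - v) ^ (2*α - 1) := by
  obtain ⟨hα0, hα2⟩ := hα
  have ha : 0 < u - v := by linarith
  have h1pos : (0:ℝ) < 1/α + 1/(1-2*α) :=
    add_pos (one_div_pos.mpr hα0) (one_div_pos.mpr (by linarith))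
  have hRHSpos : 0 < (C^2 * (1/α + 1/(1-2*α))) * (u - v) ^ (2*α - 1) :=
    mul_pos (mul_pos (pow_pos hC 2) h1pos) (Real.rpow_pos_of_pos ha _)
  by_cases hInt : IntegrableOn (fun r => Kd u r * Kd v r) (Set.Iic v)
  · obtain ⟨hFint, hFval⟩ := aux_sub α u v ⟨hα0, hα2⟩ huv
    -- a.e. bound
    have hne' : ∀ᵐ r : ℝ, r ≠ v := by
      rw [ae_iff]
      have : {r : ℝ | ¬ r ≠ v} = {v} := by ext r; simp
      rw [this]; exact measure_singleton v
    have hne : ∀ᵐ r : ℝ ∂(volume.restrict (Set.Iic v)), r ≠ v :=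
      ae_mono Measure.restrict_le_self hne'
    have hbd : ∀ᵐ r : ℝ ∂(volume.restrict (Set.Iic v)),
        |Kd u r * Kd v r| ≤ C^2 * ((u-r)^(α-1) * (v-r)^(α-1)) := by
      filter_upwards [ae_restrict_mem measurableSet_Iic, hne] with r hr hrne
      have hrv : r < v := lt_of_le_of_ne hr hrne
      have hru : r < u := lt_trans hrv huv
      have h1 := hbound r u hru
      have h2 := hbound r v hrv
      calc |Kd u r * Kd v r| = |Kd u r| * |Kd v r| := abs_mul _ _
        _ ≤ (C * (u-r)^(α-1)) * (C * (v-r)^(α-1)) := by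
            exact mul_le_mul h1 h2 (abs_nonneg _)
              (mul_nonneg hC.le (Real.rpow_nonneg (by linarith) _))
        _ = C^2 * ((u-r)^(α-1) * (v-r)^(α-1)) := by ring
    have habs : |∫ r in Set.Iic v, Kd u r * Kd v r|
        ≤ ∫ r in Set.Iic v, |Kd u r * Kd v r| := by
      simpa only [Real.norm_eq_abs] using
        norm_integral_le_integral_norm (μ := volume.restrict (Set.Iic v))
          (fun r => Kd u r * Kd v r)
    have hmono : ∫ r in Set.Iic v, |Kd u r * Kd v r|
        ≤ ∫ r in Set.Iic v, C^2 * ((u-r)^(α-1) * (v-r)^(α-1)) :=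
      integral_mono_ae hInt.abs (hFint.const_mul _) hbd
    have hcm : ∫ r in Set.Iic v, C^2 * ((u-r)^(α-1) * (v-r)^(α-1))
        = C^2 * ∫ r in Set.Iic v, (u-r)^(α-1) * (v-r)^(α-1) := integral_const_mul _ _
    have hfin : ∫ r in Set.Iic v, (u-r)^(α-1) * (v-r)^(α-1)
        ≤ (1/α + 1/(1-2*α)) * (u-v)^(2*α-1) := by
      rw [hFval]; exact (aux_G α (u-v) ⟨hα0, hα2⟩ ha).2
    calc |∫ r in Set.Iic v, Kd u r * Kd v r|
        ≤ ∫ r in Set.Iic v, |Kd u r * Kd v r| := habs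
      _ ≤ C^2 * ∫ r in Set.Iic v, (u-r)^(α-1) * (v-r)^(α-1) := by rw [← hcm]; exact hmono
      _ ≤ C^2 * ((1/α + 1/(1-2*α)) * (u-v)^(2*α-1)) :=
          mul_le_mul_of_nonneg_left hfin (by positivity)
      _ = (C^2 * (1/α + 1/(1-2*α))) * (u - v) ^ (2*α - 1) := by ring
  · rw [integral_undef hInt]
    simpa using hRHSpos.le

/-- For an α-regular Volterra kernel `K` (with partial derivative `Kd` in the
first variable), the function `φ(u,v) = ∫_{-∞}^{u∧v} ∂₁K(u,r) ∂₁K(v,r) dr` satisfies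
`|φ(u,v)| ≤ C' |u-v|^(2α-1)` for a constant `C'` depending only on `C` and `α`. -/
theorem stmt_0 (α C : ℝ) (hα : α ∈ Set.Ioo (0 : ℝ) (1/2)) (hC : 0 < C)
    (K Kd : ℝ → ℝ → ℝ)
    (hK0 : ∀ t r : ℝ, t < r → K t r = 0)
    (hKlim : ∀ r : ℝ, Tendsto (fun t => K t r) (nhdsWithin r (Set.Ioi r)) (nhds 0))
    (hKd : ∀ r u : ℝ, r < u → HasDerivAt (fun t => K t r) (Kd u r) u)
    (hKdcont : ∀ r : ℝ, ContinuousOn (fun u => Kd u r) (Set.Ioi r))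
    (hbound : ∀ r u : ℝ, r < u → |Kd u r| ≤ C * (u - r) ^ (α - 1)) :
    ∃ C' : ℝ, 0 < C' ∧ ∀ u v : ℝ, u ≠ v →
      |∫ r in Set.Iic (min u v), Kd u r * Kd v r| ≤ C' * |u - v| ^ (2*α - 1) := by
  obtain ⟨hα0, hα2⟩ := hα
  refine ⟨C^2 * (1/α + 1/(1-2*α)), mul_pos (pow_pos hC 2)
    (add_pos (one_div_pos.mpr hα0) (one_div_pos.mpr (by linarith))), ?_⟩
  intro u v huv
  rcases huv.lt_or_gt with h | h
  · -- u < v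
    rw [min_eq_left h.le, abs_sub_comm, abs_of_pos (by linarith : 0 < v - u)]
    have := aux_key α C ⟨hα0, hα2⟩ hC Kd hbound v u h
    simpa [mul_comm] using this
  · -- v < u
    rw [min_eq_right h.le, abs_of_pos (by linarith : 0 < u - v)]
    exact aux_key α C ⟨hα0, hα2⟩ hC Kd hbound u v h
end

section
/- Let U, V be separable Hilbert spaces, α ∈ (0,1/2), and let S(t) be a C₀-semigroup on V with Φ ∈ L(U,V) such that S(r)Φ is Hilbert–Schmidt for r > 0 and ∫_0^∞ ‖S(r)Φ‖_{HS}^{2/(1+2α)} dr < ∞. Then for every T > 0, ∫_0^T ∫_0^T ‖S(u)Φ‖_{HS} ‖S(v)Φ‖_{HS} |u-v|^{2α-1} du dv < ∞. -/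
/-
Write `f r = ‖S(r)Φ‖_HS` and `q = 2/(1+2α)`. Since `S x = S(x - s) S s` and the semigroup is
uniformly bounded on `[0, T]`, `f x ≤ M f s` for `0 < s ≤ x ≤ T`, so `x f(x)^q ≤ M^q ∫ f^q`.
Interpolating, `f(x)^2 x^(2α) ≤ C f(x)^q`, which is integrable on `(0, T]`. The double integral is
then bounded by a weighted Schur test: `2 f(u) f(v) ≤ f(u)^2 (u/v)^γ + f(v)^2 (v/u)^γ` with
`γ = α + 1/2`, and by scaling `∫₀^∞ v^(-γ) |u - v|^(2α-1) dv = c u^(α - 1/2)` with `c < ∞`.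
-/

open MeasureTheory Set

/-- The Hilbert–Schmidt norm of an operator `T : U →L[ℝ] V`, computed in a Hilbert basis
`b` of `U`: `‖T‖_HS = (∑ i, ‖T (b i)‖²)^(1/2)`. -/
noncomputable def hsNorm {U V ι : Type*}
    [NormedAddCommGroup U] [InnerProductSpace ℝ U]
    [NormedAddCommGroup V] [InnerProductSpace ℝ V]
    (b : HilbertBasis ι ℝ U) (T : U →L[ℝ] V) : ℝ :=
  (∑' i, ‖T (b i)‖ ^ 2) ^ ((1 : ℝ) / 2)

theorem abs_mul_le_sq_mul_add_sq_div {u v w : ℝ} (hw : 0 < w) :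
    |u * v| ≤ u ^ 2 * w + v ^ 2 / w := by
  rw [abs_mul, ← sq_abs u, ← sq_abs v, ← sub_nonneg]
  have : |u| ^ 2 * w + |v| ^ 2 / w - |u| * |v| =
      (|u| * w - |v|) ^ 2 / (2 * w) + (|u| ^ 2 * w + |v| ^ 2 / w) / 2 := by
    field_simp
    ring
  rw [this]
  positivity

theorem sq_mul_rpow_le_of_mul_rpow_le {x z D p : ℝ} (hx : 0 ≤ x) (hz : 0 ≤ z) (hp : 0 ≤ p)
    (h : x * z ^ (2 / (1 + p)) ≤ D) : z ^ 2 * x ^ p ≤ D ^ p * z ^ (2 / (1 + p)) := by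
  set y := z ^ (2 / (1 + p))
  have hy : 0 ≤ y := Real.rpow_nonneg hz _
  have hzy : z ^ 2 = y * y ^ p := by
    rw [← Real.rpow_one_add' hy (by linarith), ← Real.rpow_mul hz,
      div_mul_cancel₀ _ (by linarith), Real.rpow_two]
  rw [hzy, mul_assoc, ← Real.mul_rpow hy hx, mul_comm]
  exact mul_le_mul_of_nonneg_right (Real.rpow_le_rpow (by positivity) (by linarith) hp) hy

theorem AEMeasurable.of_rpow {α : Type*} [MeasurableSpace α] {μ : Measure α} {f : α → ℝ} {q : ℝ}
    (hq : q ≠ 0) (hf0 : ∀ x, 0 ≤ f x) (h : AEMeasurable (fun x => f x ^ q) μ) :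
    AEMeasurable f μ := by
  simpa [← Real.rpow_mul (hf0 _), mul_inv_cancel₀ hq] using h.pow_const q⁻¹

theorem intervalIntegrable_abs_rpow {r : ℝ} (hr : -1 < r) (a b : ℝ) :
    IntervalIntegrable (fun x => |x| ^ r) volume a b := by
  rw [intervalIntegrable_iff]
  refine (integrableOn_ball_of_norm_le_rpow (μ := volume) (r := |a| + |b| + 1) (C := 1) (α := -r)
    (by simp) (by simp; linarith) (ae_of_all _ fun x => ?_)
    (continuous_abs.measurable.pow_const r).aestronglyMeasurable).mono_set fun x hx => ?_
  · simp [abs_of_nonneg (Real.rpow_nonneg (abs_nonneg x) r)]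
  · have hx' := mem_uIcc.mp (uIoc_subset_uIcc hx)
    rw [Metric.mem_ball, Real.dist_0_eq_abs, abs_lt]
    constructor <;> rcases hx' with ⟨h₁, h₂⟩ | ⟨h₁, h₂⟩ <;>
      linarith [le_abs_self a, le_abs_self b, neg_abs_le a, neg_abs_le b]

theorem integrableOn_rpow_mul_abs_one_sub_rpow {a b : ℝ} (ha : -1 < a) (hb : -1 < b)
    (hab : a + b < -1) : IntegrableOn (fun t : ℝ => t ^ a * |1 - t| ^ b) (Ioi 0) := by
  have ha0 : a < 0 := by linarith
  have hb0 : b < 0 := by linarith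
  have hmeas : ∀ s : Set ℝ, AEStronglyMeasurable (fun t : ℝ => t ^ a * |1 - t| ^ b)
      (volume.restrict s) := fun s => by fun_prop
  rw [← Ioc_union_Ioi_eq_Ioi zero_le_two]
  refine IntegrableOn.union ?_ ?_
  · have hpow : IntegrableOn (fun t : ℝ => t ^ a) (Ioc 0 2) :=
      (intervalIntegrable_iff_integrableOn_Ioc_of_le zero_le_two).mp
        (intervalIntegral.intervalIntegrable_rpow' ha)
    have habs : IntegrableOn (fun t : ℝ => |1 - t| ^ b) (Ioc 0 2) := by
      have := (intervalIntegrable_abs_rpow hb (-1) 1).comp_sub_right 1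
      norm_num at this
      simpa [abs_sub_comm] using
        (intervalIntegrable_iff_integrableOn_Ioc_of_le zero_le_two).mp this
    -- on `(0, 1/2]` the factor `|1 - t| ^ b` is bounded, on `[1/2, 2]` the factor `t ^ a` is
    refine ((hpow.const_mul ((1 / 2) ^ b)).add (habs.const_mul ((1 / 2) ^ a))).mono'
      (hmeas _) ?_
    filter_upwards [ae_restrict_mem measurableSet_Ioc] with t ht
    have ht0 : 0 < t := ht.1
    have : 0 ≤ t ^ a := by positivity
    have : 0 ≤ |1 - t| ^ b := by positivity
    have : 0 ≤ ((1 : ℝ) / 2) ^ a := by positivity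
    have : 0 ≤ ((1 : ℝ) / 2) ^ b := by positivity
    rw [Real.norm_of_nonneg (by positivity), Pi.add_apply]
    rcases le_total t (1 / 2) with ht' | ht'
    · have : |1 - t| ^ b ≤ (1 / 2) ^ b := Real.rpow_le_rpow_of_nonpos (by norm_num)
        (by rw [abs_of_pos (by linarith)]; linarith) hb0.le
      nlinarith
    · have : t ^ a ≤ (1 / 2) ^ a := Real.rpow_le_rpow_of_nonpos (by norm_num) ht' ha0.le
      nlinarith
  · refine ((integrableOn_Ioi_rpow_of_lt hab two_pos).const_mul ((1 / 2) ^ b)).mono'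
      (hmeas _) ?_
    filter_upwards [ae_restrict_mem measurableSet_Ioi] with t (ht : 2 < t)
    have habs : |1 - t| ^ b ≤ (1 / 2) ^ b * t ^ b := by
      rw [← Real.mul_rpow (by norm_num) (by linarith)]
      exact Real.rpow_le_rpow_of_nonpos (by positivity)
        (by rw [abs_of_neg (by linarith)]; linarith) hb0.le
    rw [Real.norm_of_nonneg (by positivity), Real.rpow_add (by positivity)]
    calc t ^ a * |1 - t| ^ b ≤ t ^ a * ((1 / 2) ^ b * t ^ b) := by gcongr
      _ = (1 / 2) ^ b * (t ^ a * t ^ b) := by ring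

theorem rpow_mul_abs_sub_rpow_mul_left {x t : ℝ} (hx : 0 < x) (ht : 0 ≤ t) (a b : ℝ) :
    (x * t) ^ a * |x - x * t| ^ b = x ^ (a + b) * (t ^ a * |1 - t| ^ b) := by
  rw [← mul_one_sub, abs_mul, abs_of_pos hx, Real.mul_rpow hx.le ht,
    Real.mul_rpow hx.le (abs_nonneg _), Real.rpow_add hx]
  ring

theorem integrableOn_rpow_mul_abs_sub_rpow {a b x : ℝ} (ha : -1 < a) (hb : -1 < b)
    (hab : a + b < -1) (hx : 0 < x) :
    IntegrableOn (fun y : ℝ => y ^ a * |x - y| ^ b) (Ioi 0) := by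
  rw [← mul_zero x, ← integrableOn_Ioi_comp_mul_left_iff _ _ hx]
  refine IntegrableOn.congr_fun ((integrableOn_rpow_mul_abs_one_sub_rpow ha hb hab).const_mul
    (x ^ (a + b))) (fun t ht => ?_) measurableSet_Ioi
  exact (rpow_mul_abs_sub_rpow_mul_left hx (le_of_lt ht) a b).symm

theorem integral_rpow_mul_abs_sub_rpow {a b x : ℝ} (hx : 0 < x) :
    ∫ y in Ioi 0, y ^ a * |x - y| ^ b =
      x ^ (a + b + 1) * ∫ t in Ioi 0, t ^ a * |1 - t| ^ b := by
  have := integral_comp_mul_left_Ioi (fun y : ℝ => y ^ a * |x - y| ^ b) 0 hx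
  rw [mul_zero, setIntegral_congr_fun measurableSet_Ioi
    (fun t ht => rpow_mul_abs_sub_rpow_mul_left hx (le_of_lt ht) a b), integral_const_mul,
    smul_eq_mul, eq_inv_mul_iff_mul_eq₀ hx.ne'] at this
  rw [← this, Real.rpow_add_one hx.ne']
  ring

theorem integrableOn_sq_mul_rpow_mul_rpow_mul_abs_sub_rpow {b γ : ℝ} (hb : -1 < b) (hγ : γ < 1)
    (hbγ : b < γ - 1) {s : Set ℝ} (hs : MeasurableSet s) (hs0 : s ⊆ Ioi 0) {f : ℝ → ℝ}
    (hf : AEMeasurable f (volume.restrict s))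
    (hfw : IntegrableOn (fun x => f x ^ 2 * x ^ (b + 1)) s) :
    IntegrableOn (fun p : ℝ × ℝ => f p.1 ^ 2 * p.1 ^ γ * (p.2 ^ (-γ) * |p.1 - p.2| ^ b))
      (s ×ˢ s) := by
  set C := ∫ t in Ioi (0 : ℝ), t ^ (-γ) * |1 - t| ^ b
  have hker : ∀ x ∈ s, IntegrableOn (fun y : ℝ => y ^ (-γ) * |x - y| ^ b) (Ioi 0) :=
    fun x hx => integrableOn_rpow_mul_abs_sub_rpow (by linarith) hb (by linarith) (hs0 hx)
  have hker0 : ∀ x, ∀ y ∈ Ioi (0 : ℝ), 0 ≤ y ^ (-γ) * |x - y| ^ b := fun x y (hy : 0 < y) => by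
    positivity
  rw [IntegrableOn, Measure.volume_eq_prod, ← Measure.prod_restrict]
  have hG : AEStronglyMeasurable (fun p : ℝ × ℝ => f p.1 ^ 2 * p.1 ^ γ *
      (p.2 ^ (-γ) * |p.1 - p.2| ^ b)) ((volume.restrict s).prod (volume.restrict s)) :=
    (((hf.comp_fst.pow_const 2).mul (by fun_prop)).mul (by fun_prop)).aestronglyMeasurable
  refine (integrable_prod_iff hG).2 ⟨?_, ?_⟩
  · filter_upwards [ae_restrict_mem hs] with x hx
    exact ((hker x hx).mono_set hs0).const_mul _
  refine (hfw.const_mul C).mono' hG.norm.integral_prod_right' ?_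
  filter_upwards [ae_restrict_mem hs] with x hx
  have hx0 : 0 < x := hs0 hx
  calc ‖∫ y in s, ‖f x ^ 2 * x ^ γ * (y ^ (-γ) * |x - y| ^ b)‖‖
      = f x ^ 2 * x ^ γ * ∫ y in s, y ^ (-γ) * |x - y| ^ b := by
        rw [Real.norm_of_nonneg (integral_nonneg fun _ => norm_nonneg _), ← integral_const_mul]
        refine setIntegral_congr_fun hs fun y hy => ?_
        rw [norm_mul, Real.norm_of_nonneg (by positivity),
          Real.norm_of_nonneg (hker0 x y (hs0 hy))]
    _ ≤ f x ^ 2 * x ^ γ * ∫ y in Ioi 0, y ^ (-γ) * |x - y| ^ b := by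
        refine mul_le_mul_of_nonneg_left (setIntegral_mono_set (hker x hx)
          (ae_restrict_of_forall_mem measurableSet_Ioi (hker0 x))
          (Filter.Eventually.of_forall hs0)) (by positivity)
    _ = C * (f x ^ 2 * x ^ (b + 1)) := by
        have : x ^ γ * x ^ (-γ + b + 1) = x ^ (b + 1) := by
          rw [← Real.rpow_add hx0]
          ring_nf
        rw [integral_rpow_mul_abs_sub_rpow hx0]
        linear_combination (f x ^ 2 * C) * this

theorem integrableOn_mul_mul_abs_sub_rpow {b : ℝ} (hb : b ∈ Ioo (-1) 0) {s : Set ℝ}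
    (hs : MeasurableSet s) (hs0 : s ⊆ Ioi 0) {f : ℝ → ℝ} (hf : AEMeasurable f (volume.restrict s))
    (hfw : IntegrableOn (fun x => f x ^ 2 * x ^ (b + 1)) s) :
    IntegrableOn (fun p : ℝ × ℝ => f p.1 * f p.2 * |p.1 - p.2| ^ b) (s ×ˢ s) := by
  set γ := b / 2 + 1 with hγ
  have hG := integrableOn_sq_mul_rpow_mul_rpow_mul_abs_sub_rpow (γ := γ) hb.1
    (by linarith [hb.2]) (by linarith [hb.2]) hs hs0 hf hfw
  refine (hG.add hG.swap).mono' ?_ ?_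
  · rw [Measure.volume_eq_prod, ← Measure.prod_restrict]
    exact ((hf.comp_fst.mul hf.comp_snd).mul (by fun_prop)).aestronglyMeasurable
  filter_upwards [ae_restrict_mem (hs.prod hs)] with ⟨x, y⟩ ⟨hx, hy⟩
  have hx0 : 0 < x := hs0 hx
  have hy0 : 0 < y := hs0 hy
  have hw : (x ^ γ * y ^ (-γ))⁻¹ = y ^ γ * x ^ (-γ) := by
    rw [mul_inv, ← Real.rpow_neg hx0.le, ← Real.rpow_neg hy0.le, neg_neg, mul_comm]
  have hamgm := mul_le_mul_of_nonneg_right (abs_mul_le_sq_mul_add_sq_div (u := f x) (v := f y)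
    (w := x ^ γ * y ^ (-γ)) (by positivity)) (by positivity : 0 ≤ |x - y| ^ b)
  rw [div_eq_mul_inv, hw] at hamgm
  simp only [Function.comp_apply, Prod.swap, Pi.add_apply, Real.norm_eq_abs]
  rw [abs_mul, abs_of_nonneg (by positivity : 0 ≤ |x - y| ^ b), abs_sub_comm y x]
  linear_combination hamgm

theorem IsCompact.exists_forall_opNorm_le_of_continuousOn {X 𝕜 E F : Type*} [TopologicalSpace X]
    [NontriviallyNormedField 𝕜] [NormedAddCommGroup E] [NormedSpace 𝕜 E] [CompleteSpace E]
    [NormedAddCommGroup F] [NormedSpace 𝕜 F] {K : Set X} (hK : IsCompact K)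
    {S : X → E →L[𝕜] F} (hS : ∀ x, ContinuousOn (fun t => S t x) K) :
    ∃ M, ∀ t ∈ K, ‖S t‖ ≤ M := by
  obtain ⟨M, hM⟩ := banach_steinhaus (g := fun t : K => S t) fun x =>
    let ⟨C, hC⟩ := hK.exists_bound_of_continuousOn (hS x)
    ⟨C, fun t => hC t t.2⟩
  exact ⟨M, fun t ht => hM ⟨t, ht⟩⟩

section HilbertSchmidt

variable {U V W ι : Type*} [NormedAddCommGroup U] [InnerProductSpace ℝ U]
  [NormedAddCommGroup V] [InnerProductSpace ℝ V] [NormedAddCommGroup W] [InnerProductSpace ℝ W]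
  (b : HilbertBasis ι ℝ U)

theorem hsNorm_nonneg (T : U →L[ℝ] V) : 0 ≤ hsNorm b T :=
  Real.rpow_nonneg (tsum_nonneg fun _ => sq_nonneg _) _

theorem hsNorm_comp_le (A : V →L[ℝ] W) {T : U →L[ℝ] V}
    (hT : Summable fun i => ‖T (b i)‖ ^ 2) : hsNorm b (A.comp T) ≤ ‖A‖ * hsNorm b T := by
  have hle : ∀ i, ‖A (T (b i))‖ ^ 2 ≤ ‖A‖ ^ 2 * ‖T (b i)‖ ^ 2 := fun i => by
    rw [← mul_pow]
    exact pow_le_pow_left₀ (norm_nonneg _) (A.le_opNorm _) 2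
  have hsum : ∑' i, ‖A (T (b i))‖ ^ 2 ≤ ‖A‖ ^ 2 * ∑' i, ‖T (b i)‖ ^ 2 := by
    rw [← tsum_mul_left]
    exact (Summable.of_nonneg_of_le (fun _ => sq_nonneg _) hle (hT.mul_left _)).tsum_le_tsum hle
      (hT.mul_left _)
  simp only [hsNorm, ← Real.sqrt_eq_rpow, ContinuousLinearMap.comp_apply]
  calc √(∑' i, ‖A (T (b i))‖ ^ 2) ≤ √(‖A‖ ^ 2 * ∑' i, ‖T (b i)‖ ^ 2) := Real.sqrt_le_sqrt hsum
    _ = ‖A‖ * √(∑' i, ‖T (b i)‖ ^ 2) := by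
      rw [Real.sqrt_mul (sq_nonneg _), Real.sqrt_sq (norm_nonneg _)]

theorem mul_hsNorm_comp_rpow_le_integral {S : ℝ → V →L[ℝ] V} {Φ : U →L[ℝ] V}
    (hSadd : ∀ s t : ℝ, 0 ≤ s → 0 ≤ t → S (s + t) = (S s).comp (S t))
    (hHS : ∀ r : ℝ, 0 < r → Summable (fun i => ‖((S r).comp Φ) (b i)‖ ^ 2))
    {q T M : ℝ} (hq : 0 ≤ q) (hM : ∀ t ∈ Icc 0 T, ‖S t‖ ≤ M)
    (hint : IntegrableOn (fun r => hsNorm b ((S r).comp Φ) ^ q) (Ioi 0))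
    {x : ℝ} (hx : x ∈ Ioc 0 T) :
    x * hsNorm b ((S x).comp Φ) ^ q ≤ M ^ q * ∫ r in Ioi 0, hsNorm b ((S r).comp Φ) ^ q := by
  have hM0 : 0 ≤ M := (norm_nonneg _).trans (hM 0 ⟨le_rfl, hx.1.le.trans hx.2⟩)
  have hdecay : ∀ s ∈ Ioc 0 x,
      hsNorm b ((S x).comp Φ) ^ q ≤ M ^ q * hsNorm b ((S s).comp Φ) ^ q := fun s hs => by
    have hSx : S x = (S (x - s)).comp (S s) := by
      simpa using hSadd (x - s) s (sub_nonneg.2 hs.2) hs.1.le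
    rw [← Real.mul_rpow hM0 (hsNorm_nonneg _ _)]
    refine Real.rpow_le_rpow (hsNorm_nonneg _ _) ?_ hq
    calc hsNorm b ((S x).comp Φ) = hsNorm b ((S (x - s)).comp ((S s).comp Φ)) := by
          rw [hSx, ContinuousLinearMap.comp_assoc]
      _ ≤ ‖S (x - s)‖ * hsNorm b ((S s).comp Φ) := hsNorm_comp_le b _ (hHS s hs.1)
      _ ≤ M * hsNorm b ((S s).comp Φ) := by
        gcongr
        · exact hsNorm_nonneg _ _
        · exact hM _ ⟨sub_nonneg.2 hs.2, by linarith [hs.1, hx.2]⟩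
  calc x * hsNorm b ((S x).comp Φ) ^ q
      ≤ ∫ s in Ioc 0 x, M ^ q * hsNorm b ((S s).comp Φ) ^ q := by
        simpa [Real.volume_real_Ioc_of_le hx.1.le, mul_comm] using
          setIntegral_ge_of_const_le_real measurableSet_Ioc measure_Ioc_lt_top.ne hdecay
            ((hint.mono_set Ioc_subset_Ioi_self).const_mul _)
    _ ≤ M ^ q * ∫ r in Ioi 0, hsNorm b ((S r).comp Φ) ^ q := by
        rw [integral_const_mul]
        refine mul_le_mul_of_nonneg_left (setIntegral_mono_set hint
          (ae_restrict_of_forall_mem measurableSet_Ioi fun _ _ =>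
            Real.rpow_nonneg (hsNorm_nonneg _ _) _)
          (Filter.Eventually.of_forall Ioc_subset_Ioi_self)) (by positivity)

end HilbertSchmidt

theorem stmt_10_general {U V ι : Type*}
    [NormedAddCommGroup U] [InnerProductSpace ℝ U]
    [NormedAddCommGroup V] [InnerProductSpace ℝ V] [CompleteSpace V]
    (b : HilbertBasis ι ℝ U)
    (α : ℝ) (hα : α ∈ Set.Ioo (0 : ℝ) (1/2))
    (S : ℝ → V →L[ℝ] V) (Φ : U →L[ℝ] V)
    (hSadd : ∀ s t : ℝ, 0 ≤ s → 0 ≤ t → S (s + t) = (S s).comp (S t))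
    (hScont : ∀ x : V, ContinuousOn (fun t => S t x) (Set.Ici 0))
    (hHS : ∀ r : ℝ, 0 < r → Summable (fun i => ‖((S r).comp Φ) (b i)‖ ^ 2))
    (hint : MeasureTheory.IntegrableOn
      (fun r => hsNorm b ((S r).comp Φ) ^ (2 / (1 + 2*α))) (Set.Ioi (0:ℝ))) :
    ∀ T : ℝ, 0 < T →
      MeasureTheory.IntegrableOn
        (fun p : ℝ × ℝ =>
          hsNorm b ((S p.1).comp Φ) * hsNorm b ((S p.2).comp Φ) * |p.1 - p.2| ^ (2*α - 1))
        (Set.Ioc 0 T ×ˢ Set.Ioc 0 T) := by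
  intro T _
  obtain ⟨hα0, hα1⟩ := hα
  obtain ⟨M, hM⟩ := isCompact_Icc.exists_forall_opNorm_le_of_continuousOn (K := Icc 0 T)
    fun x => (hScont x).mono Icc_subset_Ici_self
  set D := M ^ (2 / (1 + 2 * α)) * ∫ r in Ioi 0, hsNorm b ((S r).comp Φ) ^ (2 / (1 + 2 * α))
  have hfq : IntegrableOn (fun r => hsNorm b ((S r).comp Φ) ^ (2 / (1 + 2 * α))) (Ioc 0 T) :=
    hint.mono_set Ioc_subset_Ioi_self
  have hf : AEMeasurable (fun r => hsNorm b ((S r).comp Φ)) (volume.restrict (Ioc 0 T)) :=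
    .of_rpow (by positivity) (fun _ => hsNorm_nonneg _ _) hfq.aemeasurable
  have hdecay : ∀ x ∈ Ioc 0 T, x * hsNorm b ((S x).comp Φ) ^ (2 / (1 + 2 * α)) ≤ D :=
    fun x hx => mul_hsNorm_comp_rpow_le_integral b hSadd hHS (by positivity) hM hint hx
  have hfw : IntegrableOn
      (fun x => hsNorm b ((S x).comp Φ) ^ 2 * x ^ (2 * α - 1 + 1)) (Ioc 0 T) := by
    refine (hfq.const_mul (D ^ (2 * α))).mono'
      ((hf.pow_const 2).mul (by fun_prop)).aestronglyMeasurable ?_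
    filter_upwards [ae_restrict_mem measurableSet_Ioc] with x hx
    rw [sub_add_cancel, Real.norm_of_nonneg (mul_nonneg (sq_nonneg _) (Real.rpow_nonneg hx.1.le _))]
    exact sq_mul_rpow_le_of_mul_rpow_le hx.1.le (hsNorm_nonneg _ _) (by positivity) (hdecay x hx)
  exact integrableOn_mul_mul_abs_sub_rpow ⟨by linarith, by linarith⟩ measurableSet_Ioc
    Ioc_subset_Ioi_self hf hfw

/-- if `S(r)Φ` is Hilbert–Schmidt for `r > 0` with
`∫₀^∞ ‖S(r)Φ‖_HS^{2/(1+2α)} dr < ∞`, then for every `T > 0` the double integral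
`∫₀^T∫₀^T ‖S(u)Φ‖_HS ‖S(v)Φ‖_HS |u-v|^{2α-1} du dv` is finite. -/
theorem stmt_10 {U V ι : Type*}
    [NormedAddCommGroup U] [InnerProductSpace ℝ U] [CompleteSpace U]
    [NormedAddCommGroup V] [InnerProductSpace ℝ V] [CompleteSpace V]
    (b : HilbertBasis ι ℝ U)
    (α : ℝ) (hα : α ∈ Set.Ioo (0 : ℝ) (1/2))
    (S : ℝ → V →L[ℝ] V) (Φ : U →L[ℝ] V)
    (hS0 : S 0 = 1)
    (hSadd : ∀ s t : ℝ, 0 ≤ s → 0 ≤ t → S (s + t) = (S s).comp (S t))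
    (hScont : ∀ x : V, ContinuousOn (fun t => S t x) (Set.Ici 0))
    (hHS : ∀ r : ℝ, 0 < r → Summable (fun i => ‖((S r).comp Φ) (b i)‖ ^ 2))
    (hint : MeasureTheory.IntegrableOn
      (fun r => hsNorm b ((S r).comp Φ) ^ (2 / (1 + 2*α))) (Set.Ioi (0:ℝ))) :
    ∀ T : ℝ, 0 < T →
      MeasureTheory.IntegrableOn
        (fun p : ℝ × ℝ =>
          hsNorm b ((S p.1).comp Φ) * hsNorm b ((S p.2).comp Φ) * |p.1 - p.2| ^ (2*α - 1))
        (Set.Ioc 0 T ×ˢ Set.Ioc 0 T) :=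
  stmt_10_general b α hα S Φ hSadd hScont hHS hint
end
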